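/- If m(r) satisfies the Riccati inequality m' ≤ -m²/(n-1) - (n-1)H on (0, r₀), m_H satisfies the Riccati equation m_H' = -m_H²/(n-1) - (n-1)H, and lim_{r→0}(m(r) - m_H(r)) = 0, then m(r) ≤ m_H(r) for all r in (0, r₀). -/
import Mathlib

open Set Filter

/-- If `f` has derivative `f'` on `[a,b]` and `f' ≤ 0` on `(a,b)`, then `f b ≤ f a`. -/
lemma riccati_aux_decay {f f' : ℝ → ℝ} {a b : ℝ} (hab : a ≤ b)
    (hderiv : ∀ t ∈ Icc a b, HasDerivAt f (f' t) t)
    (hle : ∀ t ∈ Ioo a b, f' t ≤ 0) : f b ≤ f a := by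
  have hmono : AntitoneOn f (Icc a b) := by
    apply antitoneOn_of_deriv_nonpos (convex_Icc a b)
    · exact fun t ht => (hderiv t ht).continuousAt.continuousWithinAt
    · intro t ht
      rw [interior_Icc] at ht
      exact (hderiv t (Ioo_subset_Icc_self ht)).differentiableAt.differentiableWithinAt
    · intro t ht
      rw [interior_Icc] at ht
      rw [(hderiv t (Ioo_subset_Icc_self ht)).deriv]
      exact hle t ht
  exact hmono (left_mem_Icc.2 hab) (right_mem_Icc.2 hab) hab

/-- **Riccati comparison** underlying the mean curvature comparison theorem.
If `m` satisfies the Riccati inequality `m' ≤ -m²/(n-1) - (n-1)H` on `(0, r₀)`,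
`m_H` satisfies the Riccati equation `m_H' = -m_H²/(n-1) - (n-1)H` there,
and `m(r) - m_H(r) → 0` as `r → 0⁺`, then `m(r) ≤ m_H(r)` on `(0, r₀)`. -/
theorem riccati_comparison {n : ℕ} (hn : 2 ≤ n) (H r₀ : ℝ) (hr₀ : 0 < r₀)
    (m mH m' : ℝ → ℝ)
    (hm_deriv : ∀ r ∈ Ioo 0 r₀, HasDerivAt m (m' r) r)
    (hm_ineq : ∀ r ∈ Ioo 0 r₀, m' r ≤ -(m r) ^ 2 / ((n : ℝ) - 1) - ((n : ℝ) - 1) * H)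
    (hmH_deriv : ∀ r ∈ Ioo 0 r₀,
      HasDerivAt mH (-(mH r) ^ 2 / ((n : ℝ) - 1) - ((n : ℝ) - 1) * H) r)
    (hlim : Tendsto (fun r => m r - mH r) (nhdsWithin 0 (Ioi 0)) (nhds 0)) :
    ∀ r ∈ Ioo 0 r₀, m r ≤ mH r := by
  have hn1 : (1 : ℝ) ≤ (n : ℝ) - 1 := by
    have : (2 : ℝ) ≤ (n : ℝ) := by exact_mod_cast hn
    linarith
  have hn0 : (0 : ℝ) < (n : ℝ) - 1 := by linarith
  intro r₁ hr₁
  by_contra hcon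
  push_neg at hcon
  obtain ⟨hr₁0, hr₁r₀⟩ := hr₁
  set u : ℝ → ℝ := fun t => m t - mH t with hu
  have hur₁ : 0 < u r₁ := by simp [hu]; linarith
  set C : ℝ := |((n : ℝ) - 1) * H| with hC
  have hC0 : 0 ≤ C := abs_nonneg _
  -- derivative upper bounds
  have hmH'le : ∀ t ∈ Ioo (0:ℝ) r₀, -(mH t) ^ 2 / ((n : ℝ) - 1) - ((n : ℝ) - 1) * H ≤ C := by
    intro t ht
    have h1 : -(mH t) ^ 2 / ((n : ℝ) - 1) ≤ 0 := by
      apply div_nonpos_of_nonpos_of_nonneg (by nlinarith [sq_nonneg (mH t)]) (le_of_lt hn0)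
    have h2 : -(((n : ℝ) - 1) * H) ≤ C := neg_le_abs _
    linarith
  have hm'le : ∀ t ∈ Ioo (0:ℝ) r₀, m' t ≤ C := by
    intro t ht
    have h1 : -(m t) ^ 2 / ((n : ℝ) - 1) ≤ 0 := by
      apply div_nonpos_of_nonpos_of_nonneg (by nlinarith [sq_nonneg (m t)]) (le_of_lt hn0)
    have h2 : -(((n : ℝ) - 1) * H) ≤ C := neg_le_abs _
    have := hm_ineq t ht
    linarith
  have hsub : ∀ {a b : ℝ}, 0 < a → b ≤ r₁ → Icc a b ⊆ Ioo 0 r₀ := by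
    intro a b ha hb t ht
    exact ⟨lt_of_lt_of_le ha ht.1, lt_of_le_of_lt (le_trans ht.2 hb) hr₁r₀⟩
  -- lower bounds on m, mH on (0, r₁]
  have hlower : ∀ (f f' : ℝ → ℝ), (∀ t ∈ Ioo (0:ℝ) r₀, HasDerivAt f (f' t) t) →
      (∀ t ∈ Ioo (0:ℝ) r₀, f' t ≤ C) →
      ∀ t ∈ Ioc (0:ℝ) r₁, f r₁ - C * r₁ ≤ f t := by
    intro f f' hd hle t ht
    have key : f r₁ - C * r₁ ≤ f t - C * t := by
      have := riccati_aux_decay (f := fun x => f x - C * x) (f' := fun x => f' x - C)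
        (a := t) (b := r₁) ht.2
        (fun x hx => ((hd x (hsub ht.1 le_rfl hx)).sub
          ((hasDerivAt_id x).const_mul C)).congr_deriv (by ring))
        (fun x hx => by
          have := hle x (hsub ht.1 le_rfl (Ioo_subset_Icc_self hx))
          show f' x - C ≤ 0
          linarith)
      simpa using this
    nlinarith [ht.1, hC0]
  have hmlow := hlower m m' hm_deriv hm'le
  have hmHlow := hlower mH (fun t => -(mH t) ^ 2 / ((n : ℝ) - 1) - ((n : ℝ) - 1) * H)
    hmH_deriv hmH'le
  set L : ℝ := (m r₁ - C * r₁) + (mH r₁ - C * r₁) with hL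
  set K : ℝ := max 0 (-L / ((n : ℝ) - 1)) with hK
  have hK0 : 0 ≤ K := le_max_left _ _
  have hcK : ∀ t ∈ Ioc (0:ℝ) r₁, -(m t + mH t) / ((n : ℝ) - 1) ≤ K := by
    intro t ht
    have h1 := hmlow t ht
    have h2 := hmHlow t ht
    have : -(m t + mH t) / ((n : ℝ) - 1) ≤ -L / ((n : ℝ) - 1) :=
      (div_le_div_iff_of_pos_right hn0).2 (by linarith)
    exact this.trans (le_max_right _ _)
  -- g = u * exp(-K t)
  set g : ℝ → ℝ := fun t => u t * Real.exp (-K * t) with hg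
  have hgderiv : ∀ t ∈ Ioo (0:ℝ) r₀, HasDerivAt g
      ((m' t - (-(mH t) ^ 2 / ((n : ℝ) - 1) - ((n : ℝ) - 1) * H)) * Real.exp (-K * t)
        + u t * (Real.exp (-K * t) * -K)) t := by
    intro t ht
    have hE : HasDerivAt (fun x : ℝ => Real.exp (-K * x)) (Real.exp (-K * t) * -K) t := by
      simpa using ((hasDerivAt_id t).const_mul (-K)).exp
    exact ((hm_deriv t ht).sub (hmH_deriv t ht)).mul hE
  have hgnonpos : ∀ t ∈ Ioc (0:ℝ) r₁, 0 ≤ u t →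
      (m' t - (-(mH t) ^ 2 / ((n : ℝ) - 1) - ((n : ℝ) - 1) * H)) * Real.exp (-K * t)
        + u t * (Real.exp (-K * t) * -K) ≤ 0 := by
    intro t ht hu0
    have hE : 0 < Real.exp (-K * t) := Real.exp_pos _
    have h1 : m' t ≤ -(m t) ^ 2 / ((n : ℝ) - 1) - ((n : ℝ) - 1) * H :=
      hm_ineq t (hsub ht.1 le_rfl ⟨le_rfl, ht.2⟩)
    have h2 : m' t - (-(mH t) ^ 2 / ((n : ℝ) - 1) - ((n : ℝ) - 1) * H)
        ≤ (-(m t + mH t) / ((n : ℝ) - 1)) * u t := by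
      have : -(m t) ^ 2 / ((n : ℝ) - 1) + (mH t) ^ 2 / ((n : ℝ) - 1)
          = (-(m t + mH t) / ((n : ℝ) - 1)) * u t := by
        field_simp
        ring
      rw [← this]
      have e1 : -(mH t) ^ 2 / ((n : ℝ) - 1) = -((mH t) ^ 2 / ((n : ℝ) - 1)) := neg_div _ _
      have e2 : -(m t) ^ 2 / ((n : ℝ) - 1) = -((m t) ^ 2 / ((n : ℝ) - 1)) := neg_div _ _
      linarith
    have h3 : (-(m t + mH t) / ((n : ℝ) - 1)) * u t ≤ K * u t :=
      mul_le_mul_of_nonneg_right (hcK t ht) hu0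
    nlinarith
  -- pick s near 0
  set ε : ℝ := u r₁ * Real.exp (-K * r₁) with hε
  have hε0 : 0 < ε := mul_pos hur₁ (Real.exp_pos _)
  have hev1 : ∀ᶠ t in nhdsWithin (0:ℝ) (Ioi 0), |u t| < ε := by
    have := hlim.eventually (eventually_abs_sub_lt 0 hε0)
    simpa using this
  have hev2 : ∀ᶠ t in nhdsWithin (0:ℝ) (Ioi 0), t ∈ Ioo (0:ℝ) r₁ :=
    eventually_of_mem (Ioo_mem_nhdsGT_of_mem ⟨le_rfl, hr₁0⟩) (fun t ht => ht)
  obtain ⟨s, hs1, hs2⟩ := (hev1.and hev2).exists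
  obtain ⟨hs0, hsr₁⟩ := hs2
  -- do the Gronwall argument from a point a with u ≥ 0 on (a, r₁)
  have main : ∀ a, s ≤ a → a ≤ r₁ → (∀ t ∈ Ioo a r₁, 0 ≤ u t) → g r₁ ≤ g a := by
    intro a has har₁ hpos
    apply riccati_aux_decay har₁
    · intro t ht
      exact hgderiv t (hsub (lt_of_lt_of_le hs0 has) le_rfl ht)
    · intro t ht
      exact hgnonpos t ⟨lt_of_lt_of_le hs0 (lt_of_le_of_lt has ht.1).le, ht.2.le⟩ (hpos t ht)
  by_cases hex : ∃ t ∈ Icc s r₁, u t ≤ 0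
  · -- last zero crossing
    set T : Set ℝ := {t | t ∈ Icc s r₁ ∧ u t ≤ 0} with hT
    have hTne : T.Nonempty := hex
    have hTbdd : BddAbove T := ⟨r₁, fun t ht => ht.1.2⟩
    have hTclosed : IsClosed T := by
      have hcont : ContinuousOn u (Icc s r₁) := fun t ht =>
        ((hm_deriv t (hsub hs0 le_rfl ht)).sub
          (hmH_deriv t (hsub hs0 le_rfl ht))).continuousAt.continuousWithinAt
      have : T = Icc s r₁ ∩ u ⁻¹' (Iic 0) := by
        ext t; simp [hT, and_comm]
      rw [this]
      exact hcont.preimage_isClosed_of_isClosed isClosed_Icc isClosed_Iic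
    set t₀ : ℝ := sSup T with ht₀def
    have ht₀T : t₀ ∈ T := hTclosed.csSup_mem hTne hTbdd
    have ht₀r₁ : t₀ ≤ r₁ := ht₀T.1.2
    have hut₀ : u t₀ ≤ 0 := ht₀T.2
    have hglast : g r₁ ≤ g t₀ := by
      apply main t₀ ht₀T.1.1 ht₀r₁
      intro t ht
      by_contra hneg
      push_neg at hneg
      have : t ∈ T := ⟨⟨le_trans ht₀T.1.1 ht.1.le, ht.2.le⟩, hneg.le⟩
      exact absurd (le_csSup hTbdd this) (not_le.2 ht.1)
    have : g r₁ ≤ 0 := le_trans hglast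
      (mul_nonpos_of_nonpos_of_nonneg hut₀ (Real.exp_pos _).le)
    have : ε ≤ 0 := by simpa [hg, hε] using this
    linarith
  · push_neg at hex
    have hglast : g r₁ ≤ g s := main s le_rfl hsr₁.le
      (fun t ht => (hex t ⟨ht.1.le, ht.2.le⟩).le)
    have hus : u s < ε := lt_of_le_of_lt (le_abs_self _) hs1
    have hexps : Real.exp (-K * s) ≤ 1 := by
      apply Real.exp_le_one_iff.2
      nlinarith
    have hgs : g s ≤ u s := by
      have hu0 : 0 < u s := hex s ⟨le_rfl, hsr₁.le⟩
      calc g s = u s * Real.exp (-K * s) := rfl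
        _ ≤ u s * 1 := by nlinarith
        _ = u s := mul_one _
    have : ε ≤ u s := by
      have : ε = g r₁ := rfl
      linarith [hglast, hgs, this ▸ le_refl ε]
    linarith
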